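/- Let φ be a faithful state on R⟨x₁,…,x_d⟩ and let u be a word of length n. Then the polynomial (1/𝔥_n)·det M_u(x) is monic with leading term x_u, and for every word v with |v| < n it is orthogonal to x_v, i.e., ⟨x_v, det M_u⟩ = 0. Hence the family {(1/𝔥_{|u|}) det M_u} is pseudo-orthogonal with respect to φ. -/

import Mathlib

noncomputable section
open scoped Classical

abbrev NCPoly (d : ℕ) := FreeAlgebra ℝ (Fin d)

/-- The monomial x_u = x_{u(1)} ⋯ x_{u(k)}. -/
def Xmon {d : ℕ} (u : List (Fin d)) : NCPoly d := (u.map (FreeAlgebra.ι ℝ)).prod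

/-- A state on ℝ⟨x₁,…,x_d⟩. -/
structure IsState {d : ℕ} (φ : NCPoly d →ₗ[ℝ] ℝ) : Prop where
  unital : φ 1 = 1
  star_comp : ∀ p : NCPoly d, φ (star p) = φ p
  pos : ∀ p : NCPoly d, 0 ≤ φ (star p * p)

def ipS {d : ℕ} (φ : NCPoly d →ₗ[ℝ] ℝ) (p q : NCPoly d) : ℝ := φ (star p * q)

def nrmS {d : ℕ} (φ : NCPoly d →ₗ[ℝ] ℝ) (p : NCPoly d) : ℝ := Real.sqrt (ipS φ p p)

def IsMonicFamily {d : ℕ} (P : List (Fin d) → NCPoly d) : Prop :=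
  ∀ u, P u - Xmon u ∈
    Submodule.span ℝ {q : NCPoly d | ∃ v : List (Fin d), v.length < u.length ∧ q = Xmon v}

def IsMOPS {d : ℕ} (φ : NCPoly d →ₗ[ℝ] ℝ) (P : List (Fin d) → NCPoly d) : Prop :=
  IsMonicFamily P ∧ ∀ u v, u ≠ v → ipS φ (P u) (P v) = 0

def wordsLen (d : ℕ) : ℕ → Finset (List (Fin d))
  | 0 => {[]}
  | k + 1 => ((Finset.univ : Finset (Fin d)) ×ˢ wordsLen d k).image fun p => p.1 :: p.2

def lowWords (d n : ℕ) : Finset (List (Fin d)) := (Finset.range n).biUnion (wordsLen d)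

/-- Gram-Schmidt recursion. -/
def IsGS {d : ℕ} (φ : NCPoly d →ₗ[ℝ] ℝ) (P : List (Fin d) → NCPoly d) : Prop :=
  ∀ u, P u = Xmon u - ∑ v ∈ (lowWords d u.length).filter (fun v => nrmS φ (P v) ≠ 0),
      (ipS φ (Xmon u) (P v) / (nrmS φ (P v)) ^ 2) • P v

/-- The Hankel-type determinant 𝔥_n: the determinant of the Gram matrix
(⟨x_v, x_w⟩) indexed by all words of length < n. -/
def hankel {d : ℕ} (φ : NCPoly d →ₗ[ℝ] ℝ) (n : ℕ) : ℝ :=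
  Matrix.det (Matrix.of fun v w : {x // x ∈ lowWords d n} => ipS φ (Xmon v.1) (Xmon w.1))

/-- The monomial labelling row/column `j` of the matrix A_u: the words of length
< |u| together with the extra index `none` standing for `u` itself. -/
def colMon {d : ℕ} (u : List (Fin d)) :
    Option {x // x ∈ lowWords d u.length} → NCPoly d
  | none => Xmon u
  | some v => Xmon v.1

/-- The matrix A_u of inner products ⟨x_v, x_w⟩, rows and columns labelled by all
words of length < |u| together with u itself (label `none`). -/
def gramA {d : ℕ} (φ : NCPoly d →ₗ[ℝ] ℝ) (u : List (Fin d)) :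
    Matrix (Option {x // x ∈ lowWords d u.length})
      (Option {x // x ∈ lowWords d u.length}) ℝ :=
  Matrix.of fun v w => ipS φ (colMon u v) (colMon u w)

/-- The polynomial det M_u(x): the determinant of A_u with the u-row replaced by
the monomials (x_w)_w, computed by cofactor expansion along that row. -/
def detM {d : ℕ} (φ : NCPoly d →ₗ[ℝ] ℝ) (u : List (Fin d)) : NCPoly d :=
  ∑ j : Option {x // x ∈ lowWords d u.length},
    (((gramA φ u).updateRow none (Pi.single j 1)).det) • colMon u j

/-! ### Auxiliary lemmas -/

namespace DetMAux

variable {d : ℕ}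

lemma mem_wordsLen {k : ℕ} {w : List (Fin d)} : w ∈ wordsLen d k ↔ w.length = k := by
  induction k generalizing w with
  | zero => simp [wordsLen, List.length_eq_zero_iff]
  | succ k ih =>
    cases w with
    | nil => simp [wordsLen]
    | cons a t => simp [wordsLen, ih]

lemma mem_lowWords {n : ℕ} {v : List (Fin d)} : v ∈ lowWords d n ↔ v.length < n := by
  simp only [lowWords, Finset.mem_biUnion, Finset.mem_range, mem_wordsLen]
  constructor
  · rintro ⟨k, hk, rfl⟩; exact hk
  · intro h; exact ⟨v.length, h, rfl⟩

lemma star_smul' (a : ℝ) (p : NCPoly d) : star (a • p) = a • star p := by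
  rw [Algebra.smul_def, star_mul, FreeAlgebra.star_algebraMap, Algebra.smul_def,
    Algebra.commutes]

lemma ipS_symm {φ : NCPoly d →ₗ[ℝ] ℝ} (hφ : IsState φ) (p q : NCPoly d) :
    ipS φ p q = ipS φ q p := by
  unfold ipS
  rw [show star p * q = star (star q * p) by rw [star_mul, star_star], hφ.star_comp]

/-- `ipS` as a linear map in the second argument. -/
def ipR (φ : NCPoly d →ₗ[ℝ] ℝ) (p : NCPoly d) : NCPoly d →ₗ[ℝ] ℝ where
  toFun q := ipS φ p q
  map_add' q r := by simp [ipS, mul_add]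
  map_smul' a q := by
    simp only [ipS, RingHom.id_apply, smul_eq_mul]
    rw [mul_smul_comm, map_smul, smul_eq_mul]

/-- `ipS` as a linear map in the first argument. -/
def ipL (φ : NCPoly d →ₗ[ℝ] ℝ) (q : NCPoly d) : NCPoly d →ₗ[ℝ] ℝ where
  toFun p := ipS φ p q
  map_add' p r := by simp [ipS, star_add, add_mul]
  map_smul' a p := by
    simp only [ipS, RingHom.id_apply, smul_eq_mul]
    rw [star_smul', smul_mul_assoc, map_smul, smul_eq_mul]

lemma ipS_smul_right (φ : NCPoly d →ₗ[ℝ] ℝ) (a : ℝ) (p q : NCPoly d) :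
    ipS φ p (a • q) = a * ipS φ p q := (ipR φ p).map_smul a q

lemma ipS_smul_left (φ : NCPoly d →ₗ[ℝ] ℝ) (a : ℝ) (p q : NCPoly d) :
    ipS φ (a • p) q = a * ipS φ p q := (ipL φ q).map_smul a p

lemma xmon_single (l : List (Fin d)) :
    FreeAlgebra.equivMonoidAlgebraFreeMonoid (Xmon l)
      = MonoidAlgebra.single (FreeMonoid.ofList l) (1:ℝ) := by
  induction l with
  | nil =>
    simp [Xmon]
    rfl
  | cons a t ih =>
    have h : Xmon (a :: t) = FreeAlgebra.ι ℝ a * Xmon t := by simp [Xmon]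
    have h2 : (FreeAlgebra.equivMonoidAlgebraFreeMonoid (FreeAlgebra.ι ℝ a))
        = MonoidAlgebra.single (FreeMonoid.of a) (1:ℝ) := by
      simp [FreeAlgebra.equivMonoidAlgebraFreeMonoid]
    rw [h, map_mul, ih, h2, MonoidAlgebra.single_mul_single, one_mul]
    rfl

lemma basis_xmon (l : List (Fin d)) :
    FreeAlgebra.basisFreeMonoid ℝ (Fin d) (FreeMonoid.ofList l) = Xmon l := by
  have h := xmon_single (d := d) l
  have h2 : Xmon l = (FreeAlgebra.equivMonoidAlgebraFreeMonoid
      (R := ℝ) (X := Fin d)).symm (MonoidAlgebra.single (FreeMonoid.ofList l) (1:ℝ)) := by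
    rw [← h]; simp
  rw [h2]
  simp [FreeAlgebra.basisFreeMonoid, Module.Basis.map_apply]

lemma xmon_linearIndependent (n : ℕ) :
    LinearIndependent ℝ (fun v : {x // x ∈ lowWords d n} => Xmon v.1) := by
  have hb := (FreeAlgebra.basisFreeMonoid ℝ (Fin d)).linearIndependent
  have h2 := hb.comp (fun v : {x // x ∈ lowWords d n} => FreeMonoid.ofList v.1)
    (fun a b hab => Subtype.ext (congrArg FreeMonoid.toList hab))
  have h3 : ((FreeAlgebra.basisFreeMonoid ℝ (Fin d)) ∘
      fun v : {x // x ∈ lowWords d n} => FreeMonoid.ofList v.1)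
      = fun v : {x // x ∈ lowWords d n} => Xmon v.1 := by
    funext v; exact basis_xmon v.1
  rwa [h3] at h2

lemma ipS_sum_sum {ι : Type} [Fintype ι] (φ : NCPoly d →ₗ[ℝ] ℝ) (x : ι → ℝ)
    (f : ι → NCPoly d) :
    ipS φ (∑ v, x v • f v) (∑ w, x w • f w)
      = ∑ v, ∑ w, x v * (x w * ipS φ (f v) (f w)) := by
  rw [show ipS φ (∑ v, x v • f v) (∑ w, x w • f w)
      = (ipL φ (∑ w, x w • f w)) (∑ v, x v • f v) from rfl, map_sum]
  refine Finset.sum_congr rfl fun v _ => ?_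
  rw [show (ipL φ (∑ w, x w • f w)) (x v • f v)
      = ipS φ (x v • f v) (∑ w, x w • f w) from rfl, ipS_smul_left,
    show ipS φ (f v) (∑ w, x w • f w) = (ipR φ (f v)) (∑ w, x w • f w) from rfl,
    map_sum, Finset.mul_sum]
  refine Finset.sum_congr rfl fun w _ => ?_
  rw [show (ipR φ (f v)) (x w • f w) = ipS φ (f v) (x w • f w) from rfl, ipS_smul_right]

/-- The Gram matrix of the low words is positive definite. -/
lemma gram_posDef {φ : NCPoly d →ₗ[ℝ] ℝ} (hφ : IsState φ)
    (hfaithful : ∀ p : NCPoly d, φ (star p * p) = 0 → p = 0) (n : ℕ) :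
    (Matrix.of fun v w : {x // x ∈ lowWords d n} =>
        ipS φ (Xmon v.1) (Xmon w.1)).PosDef := by
  rw [Matrix.posDef_iff_dotProduct_mulVec]
  constructor
  · ext v w
    simp only [Matrix.conjTranspose_apply, Matrix.of_apply, star_trivial]
    exact ipS_symm hφ (Xmon w.1) (Xmon v.1)
  · intro x hx
    have key : dotProduct (star x)
        (Matrix.mulVec (Matrix.of fun v w : {x // x ∈ lowWords d n} =>
          ipS φ (Xmon v.1) (Xmon w.1)) x)
        = ipS φ (∑ v, x v • Xmon v.1) (∑ w, x w • Xmon w.1) := by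
      rw [ipS_sum_sum]
      simp only [dotProduct, Matrix.mulVec, dotProduct, Pi.star_apply,
        star_trivial, Matrix.of_apply, Finset.mul_sum]
      refine Finset.sum_congr rfl fun v _ => Finset.sum_congr rfl fun w _ => by ring
    rw [key]
    have hpne : (∑ v, x v • Xmon v.1 : NCPoly d) ≠ 0 := by
      intro h0
      apply hx
      have := Fintype.linearIndependent_iff.1 (xmon_linearIndependent (d := d) n) x h0
      funext v; exact this v
    have h1 : 0 ≤ ipS φ (∑ v, x v • Xmon v.1) (∑ v, x v • Xmon v.1) := hφ.pos _
    rcases h1.lt_or_eq with hlt | heq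
    · exact hlt
    · exact absurd (hfaithful _ heq.symm) hpne

lemma hankel_pos {φ : NCPoly d →ₗ[ℝ] ℝ} (hφ : IsState φ)
    (hfaithful : ∀ p : NCPoly d, φ (star p * p) = 0 → p = 0) (n : ℕ) :
    0 < hankel φ n :=
  (gram_posDef hφ hfaithful n).det_pos

/-- Linearity of the determinant in a fixed row. -/
def rowDetLM {m : Type*} [Fintype m] [DecidableEq m] (A : Matrix m m ℝ) (i : m) :
    (m → ℝ) →ₗ[ℝ] ℝ where
  toFun c := (A.updateRow i c).det
  map_add' u v := Matrix.det_updateRow_add A i u v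
  map_smul' s u := Matrix.det_updateRow_smul A i s u

lemma det_updateRow_eq_sum {m : Type*} [Fintype m] [DecidableEq m]
    (A : Matrix m m ℝ) (i : m) (c : m → ℝ) :
    (A.updateRow i c).det = ∑ j, c j * (A.updateRow i (Pi.single j 1)).det := by
  have h := LinearMap.pi_apply_eq_sum_univ (rowDetLM A i) c
  rw [show (A.updateRow i c).det = rowDetLM A i c from rfl, h]
  refine Finset.sum_congr rfl (fun j _ => ?_)
  have hrow : (fun j' => if j = j' then (1:ℝ) else 0) = Pi.single j (1:ℝ) := by
    funext j''
    rw [Pi.single_apply]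
    exact if_congr eq_comm rfl rfl
  calc c j • rowDetLM A i (fun j' => if j = j' then 1 else 0)
      = c j * (A.updateRow i (fun j' => if j = j' then 1 else 0)).det := rfl
    _ = c j * (A.updateRow i (Pi.single j 1)).det := by rw [hrow]

/-- Orthogonality: detM u is orthogonal to every shorter monomial. -/
lemma ipS_xmon_detM {φ : NCPoly d →ₗ[ℝ] ℝ} (u v : List (Fin d))
    (hv : v.length < u.length) : ipS φ (Xmon v) (detM φ u) = 0 := by
  have hvmem : v ∈ lowWords d u.length := mem_lowWords.2 hv
  have expand : ipS φ (Xmon v) (detM φ u)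
      = ∑ j : Option {x // x ∈ lowWords d u.length},
        (((gramA φ u).updateRow none (Pi.single j 1)).det) * ipS φ (Xmon v) (colMon u j) := by
    rw [show (ipS φ (Xmon v) (detM φ u) : ℝ) = (ipR φ (Xmon v)) (detM φ u) from rfl,
      show detM φ u = ∑ j : Option {x // x ∈ lowWords d u.length},
        (((gramA φ u).updateRow none (Pi.single j 1)).det) • colMon u j from rfl,
      map_sum]
    refine Finset.sum_congr rfl (fun j _ => ?_)
    rw [show ((ipR φ (Xmon v)) ((((gramA φ u).updateRow none (Pi.single j 1)).det) • colMon u j) : ℝ)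
        = ipS φ (Xmon v) ((((gramA φ u).updateRow none (Pi.single j 1)).det) • colMon u j) from rfl,
      ipS_smul_right]
  rw [expand]
  have hrw : ∑ j : Option {x // x ∈ lowWords d u.length},
      (((gramA φ u).updateRow none (Pi.single j 1)).det) * ipS φ (Xmon v) (colMon u j)
      = ((gramA φ u).updateRow none (fun j => ipS φ (Xmon v) (colMon u j))).det := by
    rw [det_updateRow_eq_sum]
    exact Finset.sum_congr rfl (fun j _ => mul_comm _ _)
  rw [hrw]
  apply Matrix.det_zero_of_row_eq (i := none) (j := some ⟨v, hvmem⟩) (by simp)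
  funext j
  rw [Matrix.updateRow_self, Matrix.updateRow_ne (by simp)]
  rfl

/-- An explicit equivalence between `ι ⊕ PUnit` and `Option ι`. -/
def optEquiv (ι : Type) : ι ⊕ Unit ≃ Option ι where
  toFun := Sum.elim some (fun _ => none)
  invFun o := Option.elim o (Sum.inr Unit.unit) Sum.inl
  left_inv := by rintro (v | ⟨⟩) <;> rfl
  right_inv := by rintro (_ | v) <;> rfl

/-- The cofactor at the `none` position equals the Hankel determinant. -/
lemma cofactor_none {φ : NCPoly d →ₗ[ℝ] ℝ} (u : List (Fin d)) :
    ((gramA φ u).updateRow none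
      (Pi.single (none : Option {x // x ∈ lowWords d u.length}) 1)).det
      = hankel φ u.length := by
  set M := (gramA φ u).updateRow none
    (Pi.single (none : Option {x // x ∈ lowWords d u.length}) 1) with hM
  have hsub : M.submatrix (optEquiv {x // x ∈ lowWords d u.length})
      (optEquiv {x // x ∈ lowWords d u.length}) = Matrix.fromBlocks
      (Matrix.of fun v w : {x // x ∈ lowWords d u.length} => ipS φ (Xmon v.1) (Xmon w.1))
      (Matrix.of fun (v : {x // x ∈ lowWords d u.length}) (_ : Unit) =>
        ipS φ (Xmon v.1) (Xmon u))
      0 1 := by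
    ext i j
    cases i with
    | inl v =>
      cases j with
      | inl w =>
        show M (some v) (some w) = ipS φ (Xmon v.1) (Xmon w.1)
        rw [hM, Matrix.updateRow_ne (by simp)]
        rfl
      | inr pu =>
        show M (some v) none = ipS φ (Xmon v.1) (Xmon u)
        rw [hM, Matrix.updateRow_ne (by simp)]
        rfl
    | inr pu =>
      cases j with
      | inl w =>
        show M none (some w) = 0
        rw [hM, Matrix.updateRow_self]
        exact Pi.single_eq_of_ne (by simp) 1
      | inr pu' =>
        show M none none = (1 : Matrix Unit Unit ℝ) pu pu'
        rw [hM, Matrix.updateRow_self]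
        simp [Matrix.one_apply]
  have hdet := Matrix.det_submatrix_equiv_self
    (optEquiv {x // x ∈ lowWords d u.length}) M
  rw [← hdet, hsub, Matrix.det_fromBlocks_zero₂₁, Matrix.det_one, mul_one]
  rfl

end DetMAux

open DetMAux in
/-- for a faithful state, (1/𝔥_n)·det M_u is monic with leading term
x_u, is orthogonal to every x_v with |v| < n, and the family
{(1/𝔥_{|u|}) det M_u} is pseudo-orthogonal. -/
theorem detM_monic_pseudo_orthogonal {d : ℕ} (φ : NCPoly d →ₗ[ℝ] ℝ) (hφ : IsState φ)
    (hfaithful : ∀ p : NCPoly d, φ (star p * p) = 0 → p = 0) :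
    (∀ u : List (Fin d),
      (hankel φ u.length)⁻¹ • detM φ u - Xmon u ∈
        Submodule.span ℝ
          {q : NCPoly d | ∃ v : List (Fin d), v.length < u.length ∧ q = Xmon v}) ∧
    (∀ u v : List (Fin d), v.length < u.length → ipS φ (Xmon v) (detM φ u) = 0) ∧
    (∀ u₁ u₂ : List (Fin d), u₁.length ≠ u₂.length →
      ipS φ ((hankel φ u₁.length)⁻¹ • detM φ u₁) ((hankel φ u₂.length)⁻¹ • detM φ u₂) = 0) := by
  have horth : ∀ u v : List (Fin d), v.length < u.length → ipS φ (Xmon v) (detM φ u) = 0 :=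
    fun u v hv => ipS_xmon_detM u v hv
  have hdetM_orth : ∀ u₁ u₂ : List (Fin d), u₁.length < u₂.length →
      ipS φ (detM φ u₁) (detM φ u₂) = 0 := by
    intro u₁ u₂ h
    rw [show (ipS φ (detM φ u₁) (detM φ u₂) : ℝ) = (ipL φ (detM φ u₂)) (detM φ u₁) from rfl,
      show detM φ u₁ = ∑ j : Option {x // x ∈ lowWords d u₁.length},
        (((gramA φ u₁).updateRow none (Pi.single j 1)).det) • colMon u₁ j from rfl,
      map_sum]
    refine Finset.sum_eq_zero (fun j _ => ?_)
    rw [show ((ipL φ (detM φ u₂)) ((((gramA φ u₁).updateRow none (Pi.single j 1)).det) • colMon u₁ j) : ℝ)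
        = ipS φ ((((gramA φ u₁).updateRow none (Pi.single j 1)).det) • colMon u₁ j) (detM φ u₂) from rfl,
      ipS_smul_left]
    cases j with
    | none =>
      rw [show colMon u₁ none = Xmon u₁ from rfl, horth u₂ u₁ h, mul_zero]
    | some v =>
      rw [show colMon u₁ (some v) = Xmon v.1 from rfl,
        horth u₂ v.1 (lt_trans (mem_lowWords.1 v.2) h), mul_zero]
  refine ⟨?_, horth, ?_⟩
  · intro u
    have hne : hankel φ u.length ≠ 0 := (hankel_pos hφ hfaithful u.length).ne'
    have hsum : detM φ u = hankel φ u.length • Xmon u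
        + ∑ j : {x // x ∈ lowWords d u.length},
          (((gramA φ u).updateRow none (Pi.single (some j) 1)).det) • Xmon j.1 := by
      rw [show detM φ u = ∑ j : Option {x // x ∈ lowWords d u.length},
        (((gramA φ u).updateRow none (Pi.single j 1)).det) • colMon u j from rfl,
        Fintype.sum_option, cofactor_none]
      rfl
    rw [hsum, smul_add, smul_smul, inv_mul_cancel₀ hne, one_smul, add_sub_cancel_left,
      Finset.smul_sum]
    refine Submodule.sum_mem _ (fun j _ => ?_)
    rw [smul_smul]
    exact Submodule.smul_mem _ _
      (Submodule.subset_span ⟨j.1, mem_lowWords.1 j.2, rfl⟩)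
  · intro u₁ u₂ hne
    rw [ipS_smul_left, ipS_smul_right]
    rcases lt_or_gt_of_ne hne with h | h
    · rw [hdetM_orth u₁ u₂ h, mul_zero, mul_zero]
    · rw [ipS_symm hφ, hdetM_orth u₂ u₁ h, mul_zero, mul_zero]
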